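/- Consider a bi-objective multipeak problem with objectives f_a(x) = min_{i=1,...,k_a} f_{a_i}(x) and f_b(x) = min_{j=1,...,k_b} f_{b_j}(x) and a non-empty feasible set C ⊆ ℝ^n, and assume the problem ((f_a, f_b), C) satisfies the domination property. Then PS((f_a, f_b), C) = ND^{((f_a,f_b),C)}( ⋃_{i,j} PS((f_{a_i}, f_{b_j}), C) ): the Pareto set of the multipeak problem equals the set of points of the union of the pairwise Pareto sets that are not dominated (with respect to (f_a, f_b)) by any point of that union. -/

import Mathlib

/-!
A Pareto-optimal point `x` of the multipeak problem is already Pareto-optimal for the pair of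
peaks `(f_{a_i}, f_{b_j})` attaining the two minima at `x`: these peaks lie above the multipeak
objectives everywhere and agree with them at `x`, so whatever dominates `x` for the peaks also
dominates it for the multipeak problem. Hence the Pareto set lies in the union `S` of the pairwise
Pareto sets. Any Pareto set `PS ⊆ S` consists of non-dominated points of `S`, and conversely, by
the domination property, a non-Pareto point of `S` is dominated by a Pareto point, which lies in
`S`.
-/

open Matrix Set

/-- `y` dominates `x` w.r.t. the vector objective `f`. -/
def Dominates {α : Type*} {m : ℕ} (f : α → Fin m → ℝ) (y x : α) : Prop :=
  (∀ i, f y i ≤ f x i) ∧ ∃ j, f y j < f x j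

/-- The Pareto set of the constrained multiobjective problem `(f, C)`. -/
def ParetoSet {α : Type*} {m : ℕ} (f : α → Fin m → ℝ) (C : Set α) : Set α :=
  {x | x ∈ C ∧ ¬ ∃ y ∈ C, Dominates f y x}

/-- Non-dominated feasible points of `S` for the problem `(f, C)`. -/
def ND {α : Type*} {m : ℕ} (f : α → Fin m → ℝ) (C S : Set α) : Set α :=
  {x | x ∈ S ∩ C ∧ ¬ ∃ y ∈ S ∩ C, Dominates f y x}

/-- The domination property for the problem `(f, C)`. -/
def DominationProperty {α : Type*} {m : ℕ} (f : α → Fin m → ℝ) (C : Set α) : Prop :=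
  ∀ x ∈ C \ ParetoSet f C, ∃ z ∈ ParetoSet f C, Dominates f z x

section Pareto

variable {α : Type*} {m : ℕ}

theorem Dominates.of_le_of_eq {f g : α → Fin m → ℝ} {x y : α} (hfg : ∀ z, f z ≤ g z)
    (hx : g x = f x) (h : Dominates g y x) : Dominates f y x := by
  obtain ⟨hle, j, hlt⟩ := h
  rw [hx] at hle hlt
  exact ⟨fun i => (hfg y i).trans (hle i), j, (hfg y j).trans_lt hlt⟩

theorem mem_paretoSet_of_le_of_eq {f g : α → Fin m → ℝ} {C : Set α} {x : α}
    (hfg : ∀ z, f z ≤ g z) (hx : g x = f x) (h : x ∈ ParetoSet f C) : x ∈ ParetoSet g C :=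
  ⟨h.1, fun ⟨y, hyC, hy⟩ => h.2 ⟨y, hyC, hy.of_le_of_eq hfg hx⟩⟩

theorem paretoSet_eq_nd_of_subset {f : α → Fin m → ℝ} {C S : Set α}
    (hdom : DominationProperty f C) (hS : ParetoSet f C ⊆ S) :
    ParetoSet f C = ND f C S := by
  ext x
  constructor
  · intro hx
    exact ⟨⟨hS hx, hx.1⟩, fun ⟨y, ⟨_, hyC⟩, hy⟩ => hx.2 ⟨y, hyC, hy⟩⟩
  · rintro ⟨⟨-, hxC⟩, hx⟩
    by_contra hxP
    obtain ⟨z, hz, hzx⟩ := hdom x ⟨hxC, hxP⟩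
    exact hx ⟨z, ⟨hS hz, hz.1⟩, hzx⟩

end Pareto

theorem paretoSet_iInf_subset_iUnion {α ι κ : Type*} [Finite ι] [Nonempty ι] [Finite κ]
    [Nonempty κ] (fa : ι → α → ℝ) (fb : κ → α → ℝ) (C : Set α) :
    ParetoSet (fun x => ![⨅ i, fa i x, ⨅ j, fb j x]) C ⊆
      ⋃ i, ⋃ j, ParetoSet (fun x => ![fa i x, fb j x]) C := by
  intro x hx
  obtain ⟨i, hi⟩ := exists_eq_ciInf_of_finite (f := fun i => fa i x)
  obtain ⟨j, hj⟩ := exists_eq_ciInf_of_finite (f := fun j => fb j x)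
  refine mem_iUnion₂.2 ⟨i, j, mem_paretoSet_of_le_of_eq (fun z => ?_) ?_ hx⟩
  · intro k
    fin_cases k
    · exact ciInf_le (Finite.bddBelow_range _) i
    · exact ciInf_le (Finite.bddBelow_range _) j
  · simp only [hi, hj]

theorem stmt_14_general {n ka kb : ℕ} (hka : 0 < ka) (hkb : 0 < kb)
    (fa : Fin ka → (Fin n → ℝ) → ℝ) (fb : Fin kb → (Fin n → ℝ) → ℝ)
    (C : Set (Fin n → ℝ))
    (hdom : DominationProperty (fun x => ![⨅ i, fa i x, ⨅ j, fb j x]) C) :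
    ParetoSet (fun x => ![⨅ i, fa i x, ⨅ j, fb j x]) C =
      ND (fun x => ![⨅ i, fa i x, ⨅ j, fb j x]) C
        (⋃ i, ⋃ j, ParetoSet (fun x => ![fa i x, fb j x]) C) :=
  have : Nonempty (Fin ka) := ⟨⟨0, hka⟩⟩
  have : Nonempty (Fin kb) := ⟨⟨0, hkb⟩⟩
  paretoSet_eq_nd_of_subset hdom (paretoSet_iInf_subset_iUnion fa fb C)

theorem stmt_14 {n ka kb : ℕ} (hka : 0 < ka) (hkb : 0 < kb)
    (fa : Fin ka → (Fin n → ℝ) → ℝ) (fb : Fin kb → (Fin n → ℝ) → ℝ)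
    (C : Set (Fin n → ℝ)) (hC : C.Nonempty)
    (hdom : DominationProperty (fun x => ![⨅ i, fa i x, ⨅ j, fb j x]) C) :
    ParetoSet (fun x => ![⨅ i, fa i x, ⨅ j, fb j x]) C =
      ND (fun x => ![⨅ i, fa i x, ⨅ j, fb j x]) C
        (⋃ i, ⋃ j, ParetoSet (fun x => ![fa i x, fb j x]) C) :=
  stmt_14_general hka hkb fa fb C hdom
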